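/- Let a ∈ ℝ with a ∉ {0, 1} and λ := a/(1 − a). On ℂ³ define the smooth vector fields X₀(w,z) := (i, 0, 0), X₁ := (0, i, 0), X₂ := (0, 0, i), X₃(w,z) := (1/2)(0, z¹ + 1, −λ(z² + 1)), X₄(w,z) := (1/2)(2a(w + 2), z¹ + 1, λ(z² + 1)), with Lie bracket [X,Y](p) := (DY)_p(X(p)) − (DX)_p(Y(p)). Then: (a) the only nonvanishing brackets among the basis fields are [X₁, X₃] = (1/2)X₁, [X₂, X₃] = −(λ/2)X₂, [X₀, X₄] = a·X₀, [X₁, X₄] = (1/2)X₁, [X₂, X₄] = (λ/2)X₂ (and [X₀,X₁] = [X₀,X₂] = [X₀,X₃] = [X₁,X₂] = [X₃,X₄] = 0), so the real span 𝔤_a of {X₀,…,X₄} is a 5-dimensional Lie algebra of vector fields; (b) 𝔤_a has trivial center: if V ∈ 𝔤_a satisfies [V, X_j] = 0 for all j ∈ {0,…,4}, then V = 0. -/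
import Mathlib


/-- The Lie bracket of vector fields on `ℂ³ ≅ ℝ⁶`:
`[X,Y](p) = (DY)_p(X(p)) − (DX)_p(Y(p))`. -/
noncomputable def vbr (X Y : ℂ × ℂ × ℂ → ℂ × ℂ × ℂ) : ℂ × ℂ × ℂ → ℂ × ℂ × ℂ :=
  fun p => fderiv ℝ Y p (X p) - fderiv ℝ X p (Y p)


noncomputable def Dm (α β γ : ℂ) : (ℂ × ℂ × ℂ) →L[ℝ] (ℂ × ℂ × ℂ) :=
  (α • (ContinuousLinearMap.fst ℝ ℂ (ℂ × ℂ))).prod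
    (((β • (ContinuousLinearMap.fst ℝ ℂ ℂ).comp (ContinuousLinearMap.snd ℝ ℂ (ℂ × ℂ))).prod
      (γ • (ContinuousLinearMap.snd ℝ ℂ ℂ).comp (ContinuousLinearMap.snd ℝ ℂ (ℂ × ℂ)))))

@[simp] lemma Dm_apply (α β γ : ℂ) (v : ℂ × ℂ × ℂ) :
    Dm α β γ v = (α * v.1, β * v.2.1, γ * v.2.2) := by
  simp [Dm, smul_eq_mul]

lemma fderiv_affine (α β γ : ℂ) (k : ℂ × ℂ × ℂ) (p : ℂ × ℂ × ℂ) :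
    fderiv ℝ (fun q => Dm α β γ q + k) p = Dm α β γ :=
  (((Dm α β γ).hasFDerivAt).add_const k).fderiv

lemma vbr_affine (α β γ α' β' γ' : ℂ) (k k' : ℂ × ℂ × ℂ) (p : ℂ × ℂ × ℂ) :
    vbr (fun q => Dm α β γ q + k) (fun q => Dm α' β' γ' q + k') p
      = Dm α' β' γ' (Dm α β γ p + k) - Dm α β γ (Dm α' β' γ' p + k') := by
  simp only [vbr]
  rw [fderiv_affine, fderiv_affine]

lemma real_pair_eq_zero (x y : ℝ) (h : (x : ℂ) + (y : ℂ) * Complex.I = 0) :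
    x = 0 ∧ y = 0 := by
  have h1 := congrArg Complex.re h
  have h2 := congrArg Complex.im h
  simp at h1 h2
  exact ⟨h1, h2⟩

/-- (a) The bracket relations of the symmetry fields `X₀,…,X₄` (with all other brackets
among the basis fields vanishing), so that their real span `𝔤_a` is a 5-dimensional Lie
algebra of vector fields; (b) `𝔤_a` has trivial center: a member of the span commuting
with all `X_j` is zero. -/
theorem stmt12 (a : ℝ) (ha0 : a ≠ 0) (ha1 : a ≠ 1) (l : ℝ) (hl : l = a / (1 - a))
    (X0 X1 X2 X3 X4 : ℂ × ℂ × ℂ → ℂ × ℂ × ℂ)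
    (hX0 : ∀ p, X0 p = ((Complex.I, 0, 0) : ℂ × ℂ × ℂ))
    (hX1 : ∀ p, X1 p = ((0, Complex.I, 0) : ℂ × ℂ × ℂ))
    (hX2 : ∀ p, X2 p = ((0, 0, Complex.I) : ℂ × ℂ × ℂ))
    (hX3 : ∀ p : ℂ × ℂ × ℂ, X3 p =
      ((1 : ℂ) / 2) • (((0 : ℂ), p.2.1 + 1, -(l : ℂ) * (p.2.2 + 1)) : ℂ × ℂ × ℂ))
    (hX4 : ∀ p : ℂ × ℂ × ℂ, X4 p =
      ((1 : ℂ) / 2) • ((2 * (a : ℂ) * (p.1 + 2), p.2.1 + 1, (l : ℂ) * (p.2.2 + 1)) : ℂ × ℂ × ℂ)) :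
    -- (a): the nonvanishing brackets
    (∀ p, vbr X1 X3 p = ((1 : ℝ) / 2) • X1 p) ∧
    (∀ p, vbr X2 X3 p = (-(l / 2)) • X2 p) ∧
    (∀ p, vbr X0 X4 p = a • X0 p) ∧
    (∀ p, vbr X1 X4 p = ((1 : ℝ) / 2) • X1 p) ∧
    (∀ p, vbr X2 X4 p = (l / 2) • X2 p) ∧
    -- (a): the vanishing brackets
    (∀ p, vbr X0 X1 p = 0) ∧ (∀ p, vbr X0 X2 p = 0) ∧ (∀ p, vbr X0 X3 p = 0) ∧
    (∀ p, vbr X1 X2 p = 0) ∧ (∀ p, vbr X3 X4 p = 0) ∧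
    -- (a): the span is 5-dimensional
    LinearIndependent ℝ ![X0, X1, X2, X3, X4] ∧
    -- (b): trivial center
    (∀ c : Fin 5 → ℝ,
      (∀ j : Fin 5, ∀ p,
        vbr (fun q => ∑ i, c i • ![X0, X1, X2, X3, X4] i q) (![X0, X1, X2, X3, X4] j) p = 0) →
      ∀ p, (∑ i, c i • ![X0, X1, X2, X3, X4] i p) = 0) := by
  have h1a : (1 : ℝ) - a ≠ 0 := sub_ne_zero.mpr (Ne.symm ha1)
  have hlne : l ≠ 0 := by
    rw [hl]
    exact div_ne_zero ha0 h1a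
  have hF0 : X0 = fun q => Dm 0 0 0 q + ((Complex.I, 0, 0) : ℂ × ℂ × ℂ) := by
    funext p; simp [hX0]
  have hF1 : X1 = fun q => Dm 0 0 0 q + ((0, Complex.I, 0) : ℂ × ℂ × ℂ) := by
    funext p; simp [hX1]
  have hF2 : X2 = fun q => Dm 0 0 0 q + ((0, 0, Complex.I) : ℂ × ℂ × ℂ) := by
    funext p; simp [hX2]
  have hF3 : X3 = fun q => Dm 0 (1/2) (-(l : ℂ)/2) q + ((0, 1/2, -(l : ℂ)/2) : ℂ × ℂ × ℂ) := by
    funext p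
    simp only [hX3, Dm_apply, Prod.smul_mk, Prod.mk_add_mk, smul_eq_mul, Prod.mk.injEq]
    refine ⟨by ring, by ring, by ring⟩
  have hF4 : X4 = fun q => Dm (a : ℂ) (1/2) ((l : ℂ)/2) q
      + ((2 * (a : ℂ), 1/2, (l : ℂ)/2) : ℂ × ℂ × ℂ) := by
    funext p
    simp only [hX4, Dm_apply, Prod.smul_mk, Prod.mk_add_mk, smul_eq_mul, Prod.mk.injEq]
    refine ⟨by ring, by ring, by ring⟩
  refine ⟨?_, ?_, ?_, ?_, ?_, ?_, ?_, ?_, ?_, ?_, ?_, ?_⟩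
  · intro p
    rw [hF1, hF3, vbr_affine]
    simp only [Dm_apply, Prod.mk_add_mk, Prod.mk_sub_mk, Prod.smul_mk, Prod.mk.injEq,
      Complex.real_smul]
    refine ⟨by push_cast; ring, by push_cast; ring, by push_cast; ring⟩
  · intro p
    rw [hF2, hF3, vbr_affine]
    simp only [Dm_apply, Prod.mk_add_mk, Prod.mk_sub_mk, Prod.smul_mk, Prod.mk.injEq,
      Complex.real_smul]
    refine ⟨by push_cast; ring, by push_cast; ring, by push_cast; ring⟩
  · intro p
    rw [hF0, hF4, vbr_affine]
    simp only [Dm_apply, Prod.mk_add_mk, Prod.mk_sub_mk, Prod.smul_mk, Prod.mk.injEq,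
      Complex.real_smul]
    refine ⟨by push_cast; ring, by push_cast; ring, by push_cast; ring⟩
  · intro p
    rw [hF1, hF4, vbr_affine]
    simp only [Dm_apply, Prod.mk_add_mk, Prod.mk_sub_mk, Prod.smul_mk, Prod.mk.injEq,
      Complex.real_smul]
    refine ⟨by push_cast; ring, by push_cast; ring, by push_cast; ring⟩
  · intro p
    rw [hF2, hF4, vbr_affine]
    simp only [Dm_apply, Prod.mk_add_mk, Prod.mk_sub_mk, Prod.smul_mk, Prod.mk.injEq,
      Complex.real_smul]
    refine ⟨by push_cast; ring, by push_cast; ring, by push_cast; ring⟩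
  · intro p
    rw [hF0, hF1, vbr_affine]
    simp only [Dm_apply, Prod.mk_add_mk, Prod.mk_sub_mk, Prod.mk.injEq, Prod.ext_iff,
      Prod.fst_zero, Prod.snd_zero]
    refine ⟨by ring, by ring, by ring⟩
  · intro p
    rw [hF0, hF2, vbr_affine]
    simp only [Dm_apply, Prod.mk_add_mk, Prod.mk_sub_mk, Prod.mk.injEq, Prod.ext_iff,
      Prod.fst_zero, Prod.snd_zero]
    refine ⟨by ring, by ring, by ring⟩
  · intro p
    rw [hF0, hF3, vbr_affine]
    simp only [Dm_apply, Prod.mk_add_mk, Prod.mk_sub_mk, Prod.mk.injEq, Prod.ext_iff,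
      Prod.fst_zero, Prod.snd_zero]
    refine ⟨by ring, by ring, by ring⟩
  · intro p
    rw [hF1, hF2, vbr_affine]
    simp only [Dm_apply, Prod.mk_add_mk, Prod.mk_sub_mk, Prod.mk.injEq, Prod.ext_iff,
      Prod.fst_zero, Prod.snd_zero]
    refine ⟨by ring, by ring, by ring⟩
  · intro p
    rw [hF3, hF4, vbr_affine]
    simp only [Dm_apply, Prod.mk_add_mk, Prod.mk_sub_mk, Prod.mk.injEq, Prod.ext_iff,
      Prod.fst_zero, Prod.snd_zero]
    refine ⟨by ring, by ring, by ring⟩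
  · rw [Fintype.linearIndependent_iff]
    intro g hg
    have h := congrFun hg ((0, 0, 0) : ℂ × ℂ × ℂ)
    simp only [Fin.sum_univ_five, Matrix.cons_val_zero, Matrix.cons_val_one, Matrix.head_cons,
      Matrix.cons_val_two, Matrix.tail_cons, Matrix.cons_val_three, Matrix.cons_val_four,
      Pi.smul_apply, Pi.add_apply, hX0, hX1, hX2, hX3, hX4, Pi.zero_apply,
      Prod.smul_mk, Prod.mk_add_mk, smul_eq_mul, Complex.real_smul, Prod.ext_iff,
      Prod.fst_add, Prod.snd_add, Prod.fst_zero, Prod.snd_zero] at h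
    obtain ⟨e1, e2, e3⟩ := h
    have p1 := real_pair_eq_zero (2 * a * g 4) (g 0) (by push_cast; linear_combination e1)
    have p2 := real_pair_eq_zero ((g 3 + g 4) / 2) (g 1) (by push_cast; linear_combination e2)
    have p3 := real_pair_eq_zero (l * (g 4 - g 3) / 2) (g 2) (by push_cast; linear_combination e3)
    have hg4 : g 4 = 0 := by
      rcases mul_eq_zero.mp p1.1 with h | h
      · rcases mul_eq_zero.mp h with h' | h'
        · norm_num at h'
        · exact absurd h' ha0
      · exact h
    have hg3 : g 3 = 0 := by have := p2.1; linarith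
    intro i
    fin_cases i
    · exact p1.2
    · exact p2.2
    · exact p3.2
    · exact hg3
    · exact hg4
  · intro c hc
    have hFV : (fun q => ∑ i, c i • ![X0, X1, X2, X3, X4] i q)
        = fun q => Dm ((c 4 : ℂ) * a) (((c 3 : ℂ) + c 4)/2) ((l : ℂ) * ((c 4 : ℂ) - c 3)/2) q
        + (((c 0 : ℂ) * Complex.I + 2 * a * c 4,
            (c 1 : ℂ) * Complex.I + ((c 3 : ℂ) + c 4)/2,
            (c 2 : ℂ) * Complex.I + (l : ℂ) * ((c 4 : ℂ) - c 3)/2) : ℂ × ℂ × ℂ) := by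
      funext p
      simp only [Fin.sum_univ_five, Matrix.cons_val_zero, Matrix.cons_val_one,
        Matrix.head_cons, Matrix.cons_val_two, Matrix.tail_cons, Matrix.cons_val_three,
        Matrix.cons_val_four, hX0, hX1, hX2, hX3, hX4, Dm_apply, Prod.smul_mk,
        Prod.mk_add_mk, smul_eq_mul, Complex.real_smul, Prod.mk.injEq]
      refine ⟨by push_cast; ring, by push_cast; ring, by push_cast; ring⟩
    have h0 := hc 0 ((0,0,0) : ℂ × ℂ × ℂ)
    have h1b := hc 1 ((0,0,0) : ℂ × ℂ × ℂ)
    have h3b := hc 3 ((0,0,0) : ℂ × ℂ × ℂ)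
    have h4b := hc 4 ((0,0,0) : ℂ × ℂ × ℂ)
    simp only [Matrix.cons_val_zero, Matrix.cons_val_one, Matrix.head_cons,
      Matrix.cons_val_three, Matrix.cons_val_four, Matrix.tail_cons] at h0 h1b h3b h4b
    rw [hFV, hF0, vbr_affine] at h0
    rw [hFV, hF1, vbr_affine] at h1b
    rw [hFV, hF3, vbr_affine] at h3b
    rw [hFV, hF4, vbr_affine] at h4b
    simp only [Dm_apply, Prod.mk_add_mk, Prod.mk_sub_mk, Prod.ext_iff, Prod.mk.injEq,
      Prod.fst_zero, Prod.snd_zero] at h0 h1b h3b h4b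
    obtain ⟨f1, -, -⟩ := h0
    obtain ⟨-, f2, -⟩ := h1b
    obtain ⟨-, f3, f4⟩ := h3b
    obtain ⟨f5, -, -⟩ := h4b
    -- f1 : -((c4*a)*I) = 0  (essentially), f2 : (c3+c4)/2 * I = 0 ...
    have q1 := real_pair_eq_zero 0 (c 4 * a) (by push_cast; linear_combination -f1)
    have q2 := real_pair_eq_zero 0 ((c 3 + c 4) / 2) (by push_cast; linear_combination -f2)
    have hc4 : c 4 = 0 := by
      rcases mul_eq_zero.mp q1.2 with h | h
      · exact h
      · exact absurd h ha0
    have hc3 : c 3 = 0 := by have := q2.2; rw [hc4] at this; linarith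
    have q3 := real_pair_eq_zero 0 (c 1 / 2) (by push_cast; linear_combination f3)
    have q4 := real_pair_eq_zero 0 (-(l * c 2 / 2)) (by push_cast; linear_combination f4)
    have q5 := real_pair_eq_zero 0 (a * c 0) (by push_cast; linear_combination f5)
    have hc1 : c 1 = 0 := by have := q3.2; linarith
    have hc2 : c 2 = 0 := by
      have h := q4.2
      have : l * c 2 = 0 := by linarith
      rcases mul_eq_zero.mp this with h' | h'
      · exact absurd h' hlne
      · exact h'
    have hc0 : c 0 = 0 := by
      rcases mul_eq_zero.mp q5.2 with h | h
      · exact absurd h ha0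
      · exact h
    intro p
    simp [Fin.sum_univ_five, hc0, hc1, hc2, hc3, hc4]
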